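/- For all distinct positive real numbers a and b, S(Q(a,b), G(a,b)) > A(a,b) > I(a,b). -/

import Mathlib

noncomputable def A (a b : ℝ) : ℝ := (a + b) / 2
noncomputable def G (a b : ℝ) : ℝ := Real.sqrt (a * b)
noncomputable def Q (a b : ℝ) : ℝ := Real.sqrt ((a ^ 2 + b ^ 2) / 2)
noncomputable def S (a b : ℝ) : ℝ := (a ^ a * b ^ b) ^ (1 / (a + b))
noncomputable def I (a b : ℝ) : ℝ := (1 / Real.exp 1) * (a ^ a / b ^ b) ^ (1 / (a - b))

/-! Since `Q (Q a b) (G a b) = A a b`, the first inequality is `Q x y < S x y` for `x ≠ y`.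
Taking logarithms and writing the two numbers as `s (1 + t)`, `s (1 - t)` with `0 < t < 1`,
the two inequalities become
`log (1 + t²) < (1 + t) log (1 + t) + (1 - t) log (1 - t)` and
`(1 + t) log (1 + t) - (1 - t) log (1 - t) < 2 t`.
In both, the two sides agree at `t = 0` and the difference has positive derivative on `(0, 1)`:
`log (1 + t) - log (1 - t) - 2 t / (1 + t²)`, positive because the series of
`log (1 + t) - log (1 - t)` starts with `2 t`, and `-log (1 - t²)`. -/

open Real Set

lemma lt_of_hasDerivAt_pos {f f' : ℝ → ℝ} {a b : ℝ} (hab : a < b)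
    (hf : ∀ t ∈ Icc a b, HasDerivAt f (f' t) t) (hf' : ∀ t ∈ Ioo a b, 0 < f' t) :
    f a < f b := by
  have hmono : StrictMonoOn f (Icc a b) := by
    refine strictMonoOn_of_deriv_pos (convex_Icc a b)
      (fun t ht => (hf t ht).continuousAt.continuousWithinAt) fun t ht => ?_
    rw [interior_Icc] at ht
    rw [(hf t (Ioo_subset_Icc_self ht)).deriv]
    exact hf' t ht
  exact hmono (left_mem_Icc.2 hab.le) (right_mem_Icc.2 hab.le) hab

lemma hasDerivAt_one_add_mul_log {t : ℝ} (ht : 0 < 1 + t) :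
    HasDerivAt (fun u => (1 + u) * log (1 + u)) (log (1 + t) + 1) t := by
  simpa [Function.comp_def] using
    (hasDerivAt_mul_log ht.ne').comp t ((hasDerivAt_id t).const_add 1)

lemma hasDerivAt_one_sub_mul_log {t : ℝ} (ht : 0 < 1 - t) :
    HasDerivAt (fun u => (1 - u) * log (1 - u)) (-(log (1 - t) + 1)) t := by
  simpa [Function.comp_def, add_comm] using
    (hasDerivAt_mul_log ht.ne').comp t ((hasDerivAt_id t).const_sub 1)

lemma two_mul_lt_log_one_add_sub_log_one_sub {t : ℝ} (ht₀ : 0 < t) (ht₁ : t < 1) :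
    2 * t < log (1 + t) - log (1 - t) := by
  have hsum := hasSum_log_sub_log_of_abs_lt_one (abs_lt.2 ⟨by linarith, ht₁⟩)
  have := sum_le_hasSum (Finset.range 2) (fun k _ => by positivity) hsum
  norm_num [Finset.sum_range_succ] at this
  nlinarith [pow_pos ht₀ 3]

lemma log_one_add_sq_lt {t : ℝ} (ht₀ : 0 < t) (ht₁ : t < 1) :
    log (1 + t ^ 2) < (1 + t) * log (1 + t) + (1 - t) * log (1 - t) := by
  have := lt_of_hasDerivAt_pos
    (f := fun u => (1 + u) * log (1 + u) + (1 - u) * log (1 - u) - log (1 + u ^ 2))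
    (f' := fun u => log (1 + u) - log (1 - u) - 2 * u / (1 + u ^ 2)) ht₀ ?_ ?_
  · simpa using this
  · intro u hu
    have hsq : HasDerivAt (fun u => log (1 + u ^ 2)) (2 * u / (1 + u ^ 2)) u := by
      simpa [div_eq_inv_mul, mul_comm] using
        ((hasDerivAt_pow 2 u).const_add 1).log (by positivity)
    refine (((hasDerivAt_one_add_mul_log (by linarith [hu.1])).add
      (hasDerivAt_one_sub_mul_log (by linarith [hu.2, ht₁]))).sub hsq).congr_deriv ?_
    ring
  · intro u hu
    have hlog := two_mul_lt_log_one_add_sub_log_one_sub hu.1 (hu.2.trans ht₁)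
    have : 2 * u / (1 + u ^ 2) ≤ 2 * u := div_le_self (by linarith [hu.1]) (by nlinarith)
    linarith

lemma one_add_mul_log_sub_one_sub_mul_log_lt {t : ℝ} (ht₀ : 0 < t) (ht₁ : t < 1) :
    (1 + t) * log (1 + t) - (1 - t) * log (1 - t) < 2 * t := by
  have := lt_of_hasDerivAt_pos
    (f := fun u => 2 * u - ((1 + u) * log (1 + u) - (1 - u) * log (1 - u)))
    (f' := fun u => -log (1 - u ^ 2)) ht₀ ?_ ?_
  · simpa using this
  · intro u hu
    have h₁ : 0 < 1 + u := by linarith [hu.1]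
    have h₂ : 0 < 1 - u := by linarith [hu.2, ht₁]
    refine (((hasDerivAt_id u).const_mul 2).sub
      ((hasDerivAt_one_add_mul_log h₁).sub (hasDerivAt_one_sub_mul_log h₂))).congr_deriv ?_
    rw [show 1 - u ^ 2 = (1 + u) * (1 - u) by ring, log_mul h₁.ne' h₂.ne']
    ring
  · intro u hu
    have : log (1 - u ^ 2) < 0 := log_neg (by nlinarith [hu.1, hu.2]) (by nlinarith [hu.1])
    linarith

lemma exists_eq_mul_one_add_of_lt {x y : ℝ} (hy : 0 < y) (hxy : y < x) :
    ∃ s t : ℝ, 0 < s ∧ 0 < t ∧ t < 1 ∧ x = s * (1 + t) ∧ y = s * (1 - t) := by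
  have hsum : 0 < x + y := by linarith
  refine ⟨(x + y) / 2, (x - y) / (x + y), by positivity, div_pos (by linarith) hsum,
    (div_lt_one hsum).2 (by linarith), ?_, ?_⟩ <;> field_simp <;> ring

lemma add_mul_log_sq_add_sq_lt {x y : ℝ} (hx : 0 < x) (hy : 0 < y) (hxy : x ≠ y) :
    (x + y) * log ((x ^ 2 + y ^ 2) / 2) < 2 * (x * log x + y * log y) := by
  wlog hlt : y < x generalizing x y
  · simpa [add_comm] using this hy hx hxy.symm (hxy.lt_or_gt.resolve_right hlt)
  obtain ⟨s, t, hs, ht₀, ht₁, rfl, rfl⟩ := exists_eq_mul_one_add_of_lt hy hlt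
  have hkey := mul_lt_mul_of_pos_left (log_one_add_sq_lt ht₀ ht₁) hs
  rw [show ((s * (1 + t)) ^ 2 + (s * (1 - t)) ^ 2) / 2 = s ^ 2 * (1 + t ^ 2) by ring,
    log_mul (by positivity) (by positivity), log_mul hs.ne' (by linarith),
    log_mul hs.ne' (by linarith), log_pow]
  push_cast
  nlinarith

lemma mul_log_sub_mul_log_div_sub_one_lt {a b : ℝ} (ha : 0 < a) (hb : 0 < b) (hab : a ≠ b) :
    (a * log a - b * log b) / (a - b) - 1 < log ((a + b) / 2) := by
  wlog hlt : b < a generalizing a b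
  · have := this hb ha hab.symm (hab.lt_or_gt.resolve_right hlt)
    rwa [← neg_div_neg_eq, neg_sub, neg_sub, add_comm b] at this
  obtain ⟨s, t, hs, ht₀, ht₁, rfl, rfl⟩ := exists_eq_mul_one_add_of_lt hb hlt
  have hkey := mul_lt_mul_of_pos_left (one_add_mul_log_sub_one_sub_mul_log_lt ht₀ ht₁) hs
  rw [show (s * (1 + t) + s * (1 - t)) / 2 = s by ring, sub_lt_iff_lt_add,
    div_lt_iff₀ (by nlinarith), log_mul hs.ne' (by linarith), log_mul hs.ne' (by linarith)]
  nlinarith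

lemma log_S {x y : ℝ} (hx : 0 < x) (hy : 0 < y) :
    log (S x y) = (x * log x + y * log y) / (x + y) := by
  rw [S, log_rpow (by positivity), log_mul (by positivity) (by positivity),
    log_rpow hx, log_rpow hy]
  ring

lemma log_I {a b : ℝ} (ha : 0 < a) (hb : 0 < b) :
    log (I a b) = (a * log a - b * log b) / (a - b) - 1 := by
  rw [I, log_mul (by positivity) (by positivity), log_rpow (by positivity),
    log_div one_ne_zero (exp_pos 1).ne', log_div (by positivity) (by positivity), log_one,
    log_exp, log_rpow ha, log_rpow hb]
  ring

lemma Q_Q_G_eq_A {a b : ℝ} (ha : 0 < a) (hb : 0 < b) : Q (Q a b) (G a b) = A a b := by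
  rw [Q, Q, G, sq_sqrt (by positivity), sq_sqrt (by positivity),
    show ((a ^ 2 + b ^ 2) / 2 + a * b) / 2 = ((a + b) / 2) ^ 2 by ring,
    sqrt_sq (by positivity), A]

lemma G_lt_Q {a b : ℝ} (ha : 0 < a) (hb : 0 < b) (hab : a ≠ b) : G a b < Q a b :=
  sqrt_lt_sqrt (by positivity) (by nlinarith [sq_pos_of_ne_zero (sub_ne_zero.2 hab)])

lemma Q_lt_S {x y : ℝ} (hx : 0 < x) (hy : 0 < y) (hxy : x ≠ y) : Q x y < S x y := by
  rw [Q, ← log_lt_log_iff (sqrt_pos.2 (by positivity)) (by unfold S; positivity), log_S hx hy,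
    log_sqrt (by positivity), lt_div_iff₀ (by positivity)]
  linarith [add_mul_log_sq_add_sq_lt hx hy hxy]

lemma I_lt_A {a b : ℝ} (ha : 0 < a) (hb : 0 < b) (hab : a ≠ b) : I a b < A a b := by
  rw [← log_lt_log_iff (by unfold I; positivity) (by unfold A; positivity), log_I ha hb, A]
  exact mul_log_sub_mul_log_div_sub_one_lt ha hb hab

theorem stmt_10 (a b : ℝ) (ha : 0 < a) (hb : 0 < b) (hab : a ≠ b) :
    S (Q a b) (G a b) > A a b ∧ A a b > I a b := by
  have hG : 0 < G a b := sqrt_pos.2 (mul_pos ha hb)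
  have hGQ := G_lt_Q ha hb hab
  refine ⟨?_, I_lt_A ha hb hab⟩
  rw [gt_iff_lt, ← Q_Q_G_eq_A ha hb]
  exact Q_lt_S (hG.trans hGQ) hG hGQ.ne'
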